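/- arXiv:math/0612827 — 5 statements merged into one kernel-verified Lean document; each statement's English description precedes it below -/
import Mathlib

section
/- Let D be a nonnegative-integer-valued random variable with E[A^D] < ∞ for all A > 1, and let q_j(p) := P(D_p ≥ j) for the p-thinning D_p. If for some integer k ≥ 2 the identity ∑_{j=k}^∞ q_j(p) = (λ/2) p² holds for all p ∈ [0,1], where λ := E[D] > 0, then k = 2 and P(D ∈ {0,2}) = 1. -/
/-!
With `G(s) = ∑ w_l s^l`, exchanging the two summations gives
`∑_{j ≥ 2} q_j(p) = E[(D_p - 1)⁺] = λ p - 1 + G(1 - p)`, so for `k = 2` the identity says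
`G(s) = 1 - λ/2 + λ/2 s²` on `[0, 1]`. Then `16 G(1/2) - 6 G(0) + 3 E[D] - 10 = 0`, which is
`∑ w_l c_l = 0` for the weights `c_l = 16 / 2^l - 6 [l = 0] + 3 l - 10` (`probeWeight`), which
are nonnegative and vanish only at `l ∈ {0, 2}`; hence `w` lives on `{0, 2}`.
The case `k ≥ 3` is excluded because `q_j(p) ≤ E[2^D] p^j` makes the left side `O(p³)` as
`p → 0`, which cannot equal `λ p² / 2` with `λ > 0`.
-/

open Real

noncomputable def binomProb (l r : ℕ) (p : ℝ) : ℝ :=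
  (l.choose r : ℝ) * p ^ r * (1 - p) ^ (l - r)

/-- `q_j(p) = P(D_p ≥ j)` for the p-thinning of a random variable with pmf `w`. -/
noncomputable def thinTail (w : ℕ → ℝ) (j : ℕ) (p : ℝ) : ℝ :=
  ∑' l : ℕ, w l * ∑ r ∈ Finset.Icc j l, binomProb l r p

open Finset Filter Topology Polynomial

lemma binomProb_eq_eval_bernsteinPolynomial (l r : ℕ) (p : ℝ) :
    binomProb l r p = (bernsteinPolynomial ℝ l r).eval p := by
  simp [binomProb, bernsteinPolynomial]

lemma binomProb_zero_right (l : ℕ) (p : ℝ) : binomProb l 0 p = (1 - p) ^ l := by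
  simp [binomProb]

lemma binomProb_nonneg {p : ℝ} (hp : p ∈ Set.Icc (0 : ℝ) 1) (l r : ℕ) :
    0 ≤ binomProb l r p := by
  obtain ⟨hp0, hp1⟩ := hp
  have : 0 ≤ 1 - p := sub_nonneg.2 hp1
  unfold binomProb
  positivity

lemma sum_binomProb (l : ℕ) (p : ℝ) : ∑ r ∈ range (l + 1), binomProb l r p = 1 := by
  simpa [binomProb_eq_eval_bernsteinPolynomial, eval_finsetSum] using
    congrArg (eval p) (bernsteinPolynomial.sum ℝ l)

lemma sum_mul_binomProb (l : ℕ) (p : ℝ) :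
    ∑ r ∈ range (l + 1), (r : ℝ) * binomProb l r p = l * p := by
  simpa [binomProb_eq_eval_bernsteinPolynomial, eval_finsetSum] using
    congrArg (eval p) (bernsteinPolynomial.sum_smul ℝ l)

lemma sum_Icc_binomProb_le {p : ℝ} (hp : p ∈ Set.Icc (0 : ℝ) 1) (j l : ℕ) :
    ∑ r ∈ Icc j l, binomProb l r p ≤ 2 ^ l * p ^ j := by
  obtain ⟨hp0, hp1⟩ := hp
  calc ∑ r ∈ Icc j l, binomProb l r p ≤ ∑ r ∈ Icc j l, (l.choose r : ℝ) * p ^ j := by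
        refine sum_le_sum fun r hr => ?_
        unfold binomProb
        have hpr : p ^ r ≤ p ^ j := pow_le_pow_of_le_one hp0 hp1 (mem_Icc.1 hr).1
        have hq : (1 - p) ^ (l - r) ≤ 1 := pow_le_one₀ (by linarith) (by linarith)
        calc _ ≤ (l.choose r : ℝ) * p ^ j * 1 := by gcongr
          _ = _ := mul_one _
    _ ≤ ∑ r ∈ range (l + 1), (l.choose r : ℝ) * p ^ j :=
        sum_le_sum_of_subset_of_nonneg (fun r hr => by simp at hr ⊢; omega)
          fun _ _ _ => by positivity
    _ = 2 ^ l * p ^ j := by rw [← sum_mul, ← Nat.cast_sum, Nat.sum_range_choose]; push_cast; rfl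

lemma sum_range_sum_Icc_two_add (b : ℕ → ℝ) (l : ℕ) :
    ∑ i ∈ range l, ∑ r ∈ Icc (2 + i) l, b r =
      ∑ r ∈ range (l + 1), ((r : ℝ) - 1) * b r + b 0 := by
  have hswap : ∑ i ∈ range l, ∑ r ∈ Icc (2 + i) l, b r =
      ∑ r ∈ range (l + 1), ∑ _i ∈ range (r - 1), b r :=
    sum_comm' fun i r => by simp only [mem_range, mem_Icc]; omega
  rw [hswap, sum_range_succ', sum_range_succ']
  simp only [sum_const, card_range, nsmul_eq_mul]
  push_cast
  simp only [add_sub_cancel_right]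
  ring

lemma tsum_sum_Icc_two_add_binomProb (l : ℕ) (p : ℝ) :
    ∑' i, ∑ r ∈ Icc (2 + i) l, binomProb l r p = l * p - 1 + (1 - p) ^ l := by
  rw [tsum_eq_sum (s := range l) fun i hi => by
      rw [Icc_eq_empty (by simp at hi; omega), sum_empty],
    sum_range_sum_Icc_two_add, binomProb_zero_right]
  simp only [sub_mul, one_mul, sum_sub_distrib, sum_mul_binomProb, sum_binomProb]

lemma tsum_comm_of_nonneg {α β : Type*} {f : α → β → ℝ} (hf : ∀ a b, 0 ≤ f a b)
    (hrow : ∀ a, Summable (f a)) (hsum : Summable fun a => ∑' b, f a b) :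
    ∑' b, ∑' a, f a b = ∑' a, ∑' b, f a b :=
  Summable.tsum_comm ((summable_prod_of_nonneg fun x => hf x.1 x.2).2 ⟨hrow, hsum⟩)

section thinTail

variable {w : ℕ → ℝ}

lemma summable_mul_pow_of_two_pow (hw0 : ∀ l, 0 ≤ w l) (h2 : Summable fun l => w l * 2 ^ l)
    {s : ℝ} (hs0 : 0 ≤ s) (hs2 : s ≤ 2) : Summable fun l => w l * s ^ l :=
  h2.of_nonneg_of_le (fun l => mul_nonneg (hw0 l) (pow_nonneg hs0 l))
    fun l => mul_le_mul_of_nonneg_left (pow_le_pow_left₀ hs0 hs2 l) (hw0 l)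

lemma summable_of_two_pow (hw0 : ∀ l, 0 ≤ w l) (h2 : Summable fun l => w l * 2 ^ l) :
    Summable w := by
  simpa using summable_mul_pow_of_two_pow hw0 h2 zero_le_one one_le_two

lemma summable_mul_natCast_of_two_pow (hw0 : ∀ l, 0 ≤ w l)
    (h2 : Summable fun l => w l * 2 ^ l) : Summable fun l => w l * l :=
  h2.of_nonneg_of_le (fun l => mul_nonneg (hw0 l) l.cast_nonneg)
    fun l => mul_le_mul_of_nonneg_left (by exact_mod_cast l.lt_two_pow_self.le) (hw0 l)

lemma thinTail_summand_le (hw0 : ∀ l, 0 ≤ w l) {p : ℝ} (hp : p ∈ Set.Icc (0 : ℝ) 1)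
    (j l : ℕ) : w l * ∑ r ∈ Icc j l, binomProb l r p ≤ w l * 2 ^ l * p ^ j := by
  rw [mul_assoc]
  exact mul_le_mul_of_nonneg_left (sum_Icc_binomProb_le hp j l) (hw0 l)

lemma thinTail_summand_nonneg (hw0 : ∀ l, 0 ≤ w l) {p : ℝ} (hp : p ∈ Set.Icc (0 : ℝ) 1)
    (j l : ℕ) : 0 ≤ w l * ∑ r ∈ Icc j l, binomProb l r p :=
  mul_nonneg (hw0 l) (sum_nonneg fun r _ => binomProb_nonneg hp l r)

lemma thinTail_nonneg (hw0 : ∀ l, 0 ≤ w l) {p : ℝ} (hp : p ∈ Set.Icc (0 : ℝ) 1)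
    (j : ℕ) : 0 ≤ thinTail w j p :=
  tsum_nonneg (thinTail_summand_nonneg hw0 hp j)

lemma thinTail_le (hw0 : ∀ l, 0 ≤ w l) (h2 : Summable fun l => w l * 2 ^ l) {p : ℝ}
    (hp : p ∈ Set.Icc (0 : ℝ) 1) (j : ℕ) :
    thinTail w j p ≤ (∑' l, w l * 2 ^ l) * p ^ j := by
  rw [← tsum_mul_right]
  exact Summable.tsum_le_tsum (thinTail_summand_le hw0 hp j)
    ((h2.mul_right _).of_nonneg_of_le (thinTail_summand_nonneg hw0 hp j)
      (thinTail_summand_le hw0 hp j))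
    (h2.mul_right _)

lemma tsum_thinTail_le (hw0 : ∀ l, 0 ≤ w l) (h2 : Summable fun l => w l * 2 ^ l) {p : ℝ}
    (hp0 : 0 ≤ p) (hp1 : p < 1) (k : ℕ) :
    ∑' i, thinTail w (k + i) p ≤ (∑' l, w l * 2 ^ l) * p ^ k / (1 - p) := by
  have hp : p ∈ Set.Icc (0 : ℝ) 1 := ⟨hp0, hp1.le⟩
  have hgeom : HasSum (fun i => (∑' l, w l * 2 ^ l) * p ^ (k + i))
      ((∑' l, w l * 2 ^ l) * p ^ k / (1 - p)) := by
    simpa only [pow_add, ← mul_assoc, div_eq_mul_inv] using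
      (hasSum_geometric_of_lt_one hp0 hp1).mul_left ((∑' l, w l * 2 ^ l) * p ^ k)
  rw [← hgeom.tsum_eq]
  exact Summable.tsum_le_tsum (fun i => thinTail_le hw0 h2 hp (k + i))
    (hgeom.summable.of_nonneg_of_le (fun i => thinTail_nonneg hw0 hp (k + i))
      fun i => thinTail_le hw0 h2 hp (k + i))
    hgeom.summable

lemma tsum_thinTail_two_add (hw0 : ∀ l, 0 ≤ w l) (h2 : Summable fun l => w l * 2 ^ l)
    (hw1 : ∑' l, w l = 1) {p : ℝ} (hp : p ∈ Set.Icc (0 : ℝ) 1) :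
    ∑' i, thinTail w (2 + i) p = (∑' l, w l * l) * p - 1 + ∑' l, w l * (1 - p) ^ l := by
  have hrow : ∀ l, ∑' i, w l * ∑ r ∈ Icc (2 + i) l, binomProb l r p =
      w l * l * p - w l + w l * (1 - p) ^ l := fun l => by
    rw [tsum_mul_left, tsum_sum_Icc_two_add_binomProb]; ring
  have hw := summable_of_two_pow hw0 h2
  have hl := summable_mul_natCast_of_two_pow hw0 h2
  have hq := summable_mul_pow_of_two_pow hw0 h2 (s := 1 - p) (by linarith [hp.2])
    (by linarith [hp.1])
  unfold thinTail
  rw [tsum_comm_of_nonneg (fun l i => thinTail_summand_nonneg hw0 hp (2 + i) l)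
      (fun l => summable_of_ne_finset_zero (s := range l) fun i hi => by
        rw [Icc_eq_empty (by simp at hi; omega), sum_empty, mul_zero])
      (by simpa only [hrow] using ((hl.mul_right p).sub hw).add hq),
    tsum_congr hrow, ((hl.mul_right p).sub hw).tsum_add hq, (hl.mul_right p).tsum_sub hw,
    tsum_mul_right, hw1]

lemma eq_two_of_tsum_thinTail_eq (hw0 : ∀ l, 0 ≤ w l)
    (h2 : Summable fun l => w l * 2 ^ l) {lam : ℝ} (hlam0 : 0 < lam) {k : ℕ} (hk : 2 ≤ k)
    (hid : ∀ p ∈ Set.Icc (0 : ℝ) 1, ∑' i, thinTail w (k + i) p = lam / 2 * p ^ 2) :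
    k = 2 := by
  by_contra hk2
  set M := ∑' l, w l * 2 ^ l
  have hM : 0 ≤ M := tsum_nonneg fun l => mul_nonneg (hw0 l) (by positivity)
  have hsmall : ∀ p ∈ Set.Ioo (0 : ℝ) (1 / 2), lam ≤ 4 * M * p := fun p ⟨hp0, hp1⟩ => by
    have hle := hid p ⟨hp0.le, by linarith⟩ ▸ tsum_thinTail_le hw0 h2 hp0.le (by linarith) k
    have hpk : p ^ k ≤ p ^ 3 := pow_le_pow_of_le_one hp0.le (by linarith) (by omega)
    have hdiv : M * p ^ k / (1 - p) ≤ 2 * M * p ^ 3 := by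
      rw [div_le_iff₀ (by linarith)]
      nlinarith [mul_le_mul_of_nonneg_left hpk hM,
        mul_nonneg (mul_nonneg hM (pow_pos hp0 3).le) (by linarith : (0 : ℝ) ≤ 1 - 2 * p)]
    have : lam / 2 * p ^ 2 ≤ 2 * M * p * p ^ 2 := by linarith
    linarith [le_of_mul_le_mul_right this (by positivity)]
  have hlim : Tendsto (fun p : ℝ => 4 * M * p) (𝓝[>] 0) (𝓝 0) := by
    simpa using tendsto_nhdsWithin_of_tendsto_nhds ((continuous_const_mul (4 * M)).tendsto 0)
  have := ge_of_tendsto hlim (eventually_of_mem (Ioo_mem_nhdsGT (by norm_num)) hsmall)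
  linarith

end thinTail

noncomputable def probeWeight (l : ℕ) : ℝ := 16 * (1 / 2 : ℝ) ^ l - 6 * 0 ^ l + 3 * l - 10

lemma probeWeight_pos (l : ℕ) (h0 : l ≠ 0) (h2 : l ≠ 2) : 0 < probeWeight l := by
  match l, h0, h2 with
  | 1, _, _ | 3, _, _ => norm_num [probeWeight]
  | l + 4, _, _ =>
    have : (0 : ℝ) ≤ (1 / 2) ^ (l + 4) := by positivity
    simp only [probeWeight, ne_eq, add_eq_zero, OfNat.ofNat_ne_zero, and_false,
      not_false_eq_true, zero_pow, Nat.cast_add]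
    linarith [(Nat.cast_nonneg l : (0 : ℝ) ≤ l)]

lemma probeWeight_nonneg (l : ℕ) : 0 ≤ probeWeight l := by
  rcases eq_or_ne l 0 with rfl | h0
  · norm_num [probeWeight]
  rcases eq_or_ne l 2 with rfl | h2
  · norm_num [probeWeight]
  exact (probeWeight_pos l h0 h2).le

lemma add_eq_one_of_tsum_mul_pow_eq {w : ℕ → ℝ} (hw0 : ∀ l, 0 ≤ w l) (hw : HasSum w 1)
    {lam : ℝ} (hmean : HasSum (fun l => w l * l) lam)
    (hG : ∀ s ∈ Set.Icc (0 : ℝ) 1, ∑' l, w l * s ^ l = 1 - lam / 2 + lam / 2 * s ^ 2) :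
    w 0 + w 2 = 1 := by
  have hpow : ∀ s ∈ Set.Icc (0 : ℝ) 1,
      HasSum (fun l => w l * s ^ l) (1 - lam / 2 + lam / 2 * s ^ 2) := fun s hs =>
    hG s hs ▸ (hw.summable.of_nonneg_of_le (fun l => mul_nonneg (hw0 l) (pow_nonneg hs.1 l))
      fun l => mul_le_of_le_one_right (hw0 l) (pow_le_one₀ hs.1 hs.2)).hasSum
  have hprobe : HasSum (fun l => w l * probeWeight l) 0 := by
    have hcomb := ((((hpow (1 / 2) ⟨by norm_num, by norm_num⟩).mul_left 16).sub
      ((hpow 0 ⟨le_rfl, zero_le_one⟩).mul_left 6)).add (hmean.mul_left 3)).sub (hw.mul_left 10)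
    rw [show 16 * (1 - lam / 2 + lam / 2 * (1 / 2) ^ 2) - 6 * (1 - lam / 2 + lam / 2 * 0 ^ 2)
      + 3 * lam - 10 * 1 = (0 : ℝ) by ring] at hcomb
    exact hcomb.congr_fun fun l => by unfold probeWeight; ring
  have hzero := (hasSum_zero_iff_of_nonneg fun l =>
    mul_nonneg (hw0 l) (probeWeight_nonneg l)).1 hprobe
  have hoff : ∀ l ∉ ({0, 2} : Finset ℕ), w l = 0 := fun l hl => by
    simp only [mem_insert, mem_singleton, not_or] at hl
    exact (mul_eq_zero.1 (congrFun hzero l)).resolve_right (probeWeight_pos l hl.1 hl.2).ne'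
  simpa [sum_pair] using (hw.unique (hasSum_sum_of_ne_finset_zero hoff)).symm

theorem thinTail_quadratic_identity (w : ℕ → ℝ)
    (hw0 : ∀ l, 0 ≤ w l) (hw1 : ∑' l, w l = 1)
    (hmom : ∀ A : ℝ, 1 < A → Summable fun l : ℕ => w l * A ^ l)
    (lam : ℝ) (hlam : lam = ∑' l : ℕ, w l * l) (hlam0 : 0 < lam)
    (k : ℕ) (hk : 2 ≤ k)
    (hid : ∀ p ∈ Set.Icc (0:ℝ) 1, (∑' i : ℕ, thinTail w (k + i) p) = lam / 2 * p ^ 2) :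
    k = 2 ∧ w 0 + w 2 = 1 := by
  have h2 := hmom 2 one_lt_two
  obtain rfl : k = 2 := eq_two_of_tsum_thinTail_eq hw0 h2 hlam0 hk hid
  refine ⟨rfl, add_eq_one_of_tsum_mul_pow_eq hw0 (hw1 ▸ (summable_of_two_pow hw0 h2).hasSum)
    (hlam ▸ (summable_mul_natCast_of_two_pow hw0 h2).hasSum) fun s hs => ?_⟩
  have hp : 1 - s ∈ Set.Icc (0 : ℝ) 1 := ⟨by linarith [hs.2], by linarith [hs.1]⟩
  have := hid (1 - s) hp
  rw [tsum_thinTail_two_add hw0 h2 hw1 hp, ← hlam, sub_sub_cancel] at this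
  linear_combination this
end

section
/- For every integer k ≥ 3 and μ = k − 2 > 0, one has ψ_{k−1}(μ)/(μ·π_{k−2}(μ)) < k/(2(k−1)) < 1; in particular ψ_{k−1}(k−2) < (k−2)·π_{k−2}(k−2). -/
open Real

noncomputable def poissonProb (j : ℕ) (μ : ℝ) : ℝ := μ ^ j * Real.exp (-μ) / j.factorial

noncomputable def poissonTail (j : ℕ) (μ : ℝ) : ℝ := ∑' i : ℕ, poissonProb (j + i) μ

theorem poissonTail_at_k_sub_two (k : ℕ) (hk : 3 ≤ k) :
    poissonTail (k - 1) ((k : ℝ) - 2) / (((k : ℝ) - 2) * poissonProb (k - 2) ((k : ℝ) - 2))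
        < (k : ℝ) / (2 * ((k : ℝ) - 1)) ∧
    (k : ℝ) / (2 * ((k : ℝ) - 1)) < 1 ∧
    poissonTail (k - 1) ((k : ℝ) - 2)
        < ((k : ℝ) - 2) * poissonProb (k - 2) ((k : ℝ) - 2) := by
  obtain ⟨n, rfl⟩ : ∃ n, k = n + 3 := ⟨k - 3, by omega⟩
  have h1 : n + 3 - 1 = n + 2 := rfl
  have h2 : n + 3 - 2 = n + 1 := rfl
  rw [h1, h2]
  have e0 : ((n + 3 : ℕ) : ℝ) = (n : ℝ) + 3 := by push_cast; ring
  have e1 : ((n : ℝ) + 3) - 1 = (n : ℝ) + 2 := by ring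
  have e2 : ((n : ℝ) + 3) - 2 = (n : ℝ) + 1 := by ring
  rw [e0, e1, e2]
  set μ : ℝ := (n : ℝ) + 1 with hμdef
  have hμ : μ = (n : ℝ) + 1 := hμdef
  have hμpos : 0 < μ := by rw [hμ]; positivity
  have hK : (0:ℝ) < (n : ℝ) + 3 := by positivity
  have hE : 0 < Real.exp (-μ) := Real.exp_pos _
  set r : ℝ := μ / ((n : ℝ) + 3) with hr
  have hr0 : 0 ≤ r := by positivity
  have hr1 : r < 1 := by
    rw [hr, div_lt_one hK, hμ]; linarith
  -- the geometric dominating sequence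
  set C : ℝ := poissonProb (n + 2) μ with hC
  have hCpos : 0 < C := by
    rw [hC, poissonProb]; positivity
  have hple : ∀ i : ℕ, poissonProb (n + 2 + i) μ ≤ C * r ^ i := by
    intro i
    rw [hC, poissonProb, poissonProb, hr, div_pow, div_mul_div_comm, pow_add]
    rw [div_le_div_iff₀ (by positivity) (by positivity)]
    have hfac : ((n + 2).factorial : ℝ) * ((n : ℝ) + 3) ^ i ≤ ((n + 2 + i).factorial : ℝ) := by
      have := Nat.factorial_mul_pow_le_factorial (m := n + 2) (n := i)
      calc ((n + 2).factorial : ℝ) * ((n : ℝ) + 3) ^ i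
          = (((n + 2).factorial * (n + 2 + 1) ^ i : ℕ) : ℝ) := by push_cast; ring
        _ ≤ _ := by exact_mod_cast this
    calc μ ^ (n + 2) * μ ^ i * Real.exp (-μ) * (((n + 2).factorial : ℝ) * ((n : ℝ) + 3) ^ i)
        ≤ μ ^ (n + 2) * μ ^ i * Real.exp (-μ) * ((n + 2 + i).factorial : ℝ) := by
          apply mul_le_mul_of_nonneg_left hfac; positivity
      _ = μ ^ (n + 2) * Real.exp (-μ) * μ ^ i * ((n + 2 + i).factorial : ℝ) := by ring
  have hplt : poissonProb (n + 2 + 2) μ < C * r ^ 2 := by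
    rw [hC, poissonProb, poissonProb, hr, div_pow, div_mul_div_comm, pow_add]
    rw [div_lt_div_iff₀ (by positivity) (by positivity)]
    have hfac : ((n + 2).factorial : ℝ) * ((n : ℝ) + 3) ^ 2 < ((n + 2 + 2).factorial : ℝ) := by
      have h4 : (n + 2 + 2).factorial = (n + 2).factorial * ((n + 3) * (n + 4)) := by
        show (n + 4).factorial = _
        rw [Nat.factorial_succ, Nat.factorial_succ]; ring
      rw [h4]
      push_cast
      have : ((n:ℝ) + 3) ^ 2 < ((n:ℝ) + 3) * ((n:ℝ) + 4) := by nlinarith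
      nlinarith [(Nat.cast_pos (α := ℝ)).mpr (Nat.factorial_pos (n+2))]
    calc μ ^ (n + 2) * μ ^ 2 * Real.exp (-μ) * (((n + 2).factorial : ℝ) * ((n : ℝ) + 3) ^ 2)
        < μ ^ (n + 2) * μ ^ 2 * Real.exp (-μ) * ((n + 2 + 2).factorial : ℝ) := by
          apply mul_lt_mul_of_pos_left hfac; positivity
      _ = μ ^ (n + 2) * Real.exp (-μ) * μ ^ 2 * ((n + 2 + 2).factorial : ℝ) := by ring
  have hgsum : Summable (fun i : ℕ => C * r ^ i) :=
    (summable_geometric_of_lt_one hr0 hr1).mul_left C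
  have hnonneg : ∀ i : ℕ, 0 ≤ poissonProb (n + 2 + i) μ := by
    intro i; rw [poissonProb]; positivity
  have htail : poissonTail (n + 2) μ < C * ((n : ℝ) + 3) / 2 := by
    have h := Summable.tsum_lt_tsum_of_nonneg hnonneg hple hplt hgsum (i := 2)
    rw [poissonTail] at *
    calc (∑' i, poissonProb (n + 2 + i) μ) < ∑' i, C * r ^ i := h
      _ = C * (1 - r)⁻¹ := by rw [tsum_mul_left, tsum_geometric_of_lt_one hr0 hr1]
      _ = C * ((n : ℝ) + 3) / 2 := by
          rw [hr, hμ]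
          have : 1 - ((n : ℝ) + 1) / ((n : ℝ) + 3) = 2 / ((n : ℝ) + 3) := by
            field_simp
            ring_nf
          rw [this, inv_div]; ring
  -- relate C to poissonProb (n+1) μ
  have hCrel : C = μ * poissonProb (n + 1) μ / ((n : ℝ) + 2) := by
    rw [hC, poissonProb, poissonProb]
    have : ((n + 2).factorial : ℝ) = ((n : ℝ) + 2) * ((n + 1).factorial : ℝ) := by
      rw [Nat.factorial_succ]; push_cast; ring
    rw [this, pow_succ]
    field_simp
  have hPpos : 0 < poissonProb (n + 1) μ := by rw [poissonProb]; positivity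
  have hden : 0 < μ * poissonProb (n + 1) μ := by positivity
  have hmain : poissonTail (n + 2) μ < μ * poissonProb (n + 1) μ * (((n:ℝ) + 3) / (2 * ((n:ℝ) + 2))) := by
    calc poissonTail (n + 2) μ < C * ((n : ℝ) + 3) / 2 := htail
      _ = μ * poissonProb (n + 1) μ * (((n:ℝ) + 3) / (2 * ((n:ℝ) + 2))) := by
          rw [hCrel]; field_simp
  refine ⟨?_, ?_, ?_⟩
  · rw [div_lt_div_iff₀ hden (by positivity)]
    calc poissonTail (n + 2) μ * (2 * ((n:ℝ) + 2))
        < μ * poissonProb (n + 1) μ * (((n:ℝ) + 3) / (2 * ((n:ℝ) + 2))) * (2 * ((n:ℝ) + 2)) := by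
          apply mul_lt_mul_of_pos_right hmain; positivity
      _ = ((n:ℝ) + 3) * (μ * poissonProb (n + 1) μ) := by field_simp
  · rw [div_lt_one (by positivity)]; linarith
  · calc poissonTail (n + 2) μ < μ * poissonProb (n + 1) μ * (((n:ℝ) + 3) / (2 * ((n:ℝ) + 2))) := hmain
      _ ≤ μ * poissonProb (n + 1) μ * 1 := by
          apply mul_le_mul_of_nonneg_left _ hden.le
          rw [div_le_one (by positivity)]; linarith
      _ = μ * poissonProb (n + 1) μ := by ring
end

section
/- Fix k ≥ 3 and assume μ̂ > 0 satisfies μ̂·ψ'_{k−1}(μ̂) = ψ_{k−1}(μ̂) (the stationarity condition for μ/ψ_{k−1}(μ)). Then μ̂ ≠ k − 2. -/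
open Real

/-!
Consecutive Poisson weights satisfy `π_{j+1}(μ) = π_j(μ) · μ/(j+1)`, so for `μ < j+1` the
tail `ψ_j(μ)` is dominated by a geometric series with ratio `μ/(j+1)`. At `μ = k - 2`, `j = k - 1`
this gives `ψ_{k-1}(μ) ≤ μ π_{k-2}(μ) · k/(2(k-1)) < μ π_{k-2}(μ)`, contradicting stationarity.
-/

lemma poissonProb_nonneg (j : ℕ) {μ : ℝ} (hμ : 0 ≤ μ) : 0 ≤ poissonProb j μ := by
  unfold poissonProb
  positivity

lemma poissonProb_pos (j : ℕ) {μ : ℝ} (hμ : 0 < μ) : 0 < poissonProb j μ := by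
  unfold poissonProb
  positivity

lemma poissonProb_succ (j : ℕ) (μ : ℝ) :
    poissonProb (j + 1) μ = poissonProb j μ * (μ / (j + 1)) := by
  simp only [poissonProb, pow_succ, Nat.factorial_succ, Nat.cast_mul, Nat.cast_succ]
  field_simp

lemma poissonProb_add_le (j i : ℕ) {μ : ℝ} (hμ : 0 ≤ μ) :
    poissonProb (j + i) μ ≤ poissonProb j μ * (μ / (j + 1)) ^ i := by
  induction i with
  | zero => simp
  | succ i ih =>
    have hratio : μ / ((j + i : ℕ) + 1) ≤ μ / (j + 1) := by
      gcongr
      exact_mod_cast Nat.le_add_right j i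
    calc poissonProb (j + (i + 1)) μ = poissonProb (j + i) μ * (μ / ((j + i : ℕ) + 1)) :=
          poissonProb_succ (j + i) μ
      _ ≤ poissonProb j μ * (μ / (j + 1)) ^ i * (μ / (j + 1)) :=
          mul_le_mul ih hratio (by positivity)
            (mul_nonneg (poissonProb_nonneg j hμ) (by positivity))
      _ = poissonProb j μ * (μ / (j + 1)) ^ (i + 1) := by ring

lemma poissonTail_le_geometric (j : ℕ) {μ : ℝ} (hμ : 0 ≤ μ) (hμj : μ < j + 1) :
    poissonTail j μ ≤ poissonProb j μ * (1 - μ / (j + 1))⁻¹ := by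
  have hr₀ : 0 ≤ μ / (j + 1) := by positivity
  have hr₁ : μ / (j + 1) < 1 := (div_lt_one (by positivity)).2 hμj
  have hgeom : Summable fun i : ℕ => poissonProb j μ * (μ / (j + 1)) ^ i :=
    (summable_geometric_of_lt_one hr₀ hr₁).mul_left _
  have hbound := fun i => poissonProb_add_le j i hμ
  calc poissonTail j μ ≤ ∑' i : ℕ, poissonProb j μ * (μ / (j + 1)) ^ i :=
        (hgeom.of_nonneg_of_le (fun i => poissonProb_nonneg _ hμ) hbound).tsum_le_tsum hbound hgeom
    _ = poissonProb j μ * (1 - μ / (j + 1))⁻¹ := by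
        rw [tsum_mul_left, tsum_geometric_of_lt_one hr₀ hr₁]

lemma poissonTail_succ_lt_mul_poissonProb {n : ℕ} (hn : 1 ≤ n) :
    poissonTail (n + 1) n < n * poissonProb n n := by
  have hn' : (1 : ℝ) ≤ n := by exact_mod_cast hn
  have hP := poissonProb_pos n (by linarith : (0 : ℝ) < n)
  have hgeom : (1 - (n : ℝ) / ((n + 1 : ℕ) + 1))⁻¹ = (n + 2) / 2 := by
    push_cast
    field_simp
    ring
  calc poissonTail (n + 1) n
        ≤ poissonProb (n + 1) n * (1 - (n : ℝ) / ((n + 1 : ℕ) + 1))⁻¹ :=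
        poissonTail_le_geometric (n + 1) (Nat.cast_nonneg n) (by push_cast; linarith)
    _ = n * poissonProb n n * ((n + 2) / (2 * (n + 1))) := by
        rw [poissonProb_succ, hgeom]
        field_simp
    _ < n * poissonProb n n * 1 := by
        gcongr
        rw [div_lt_one (by positivity)]
        linarith
    _ = n * poissonProb n n := mul_one _

theorem stationary_point_ne_k_sub_two_general (k : ℕ) (hk : 3 ≤ k) (μhat : ℝ)
    (hstat : μhat * poissonProb (k - 2) μhat = poissonTail (k - 1) μhat) :
    μhat ≠ (k : ℝ) - 2 := by
  rintro rfl
  obtain ⟨n, rfl⟩ : ∃ n, k = n + 2 := ⟨k - 2, by omega⟩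
  have hcast : ((n + 2 : ℕ) : ℝ) - 2 = n := by push_cast; ring
  rw [hcast, show n + 2 - 2 = n by omega, show n + 2 - 1 = n + 1 by omega] at hstat
  exact (poissonTail_succ_lt_mul_poissonProb (by omega)).ne' hstat

theorem stationary_point_ne_k_sub_two (k : ℕ) (hk : 3 ≤ k) (μhat : ℝ) (hμ : 0 < μhat)
    (hstat : μhat * poissonProb (k - 2) μhat = poissonTail (k - 1) μhat) :
    μhat ≠ (k : ℝ) - 2 :=
  stationary_point_ne_k_sub_two_general k hk μhat hstat
end

section
/- Let D_n be random variables on ℕ with D_n → D in distribution and sup_n E[A^{D_n}] < ∞ for every A > 1, and fix k ≥ 2. Define h_n(p) := E[f(D_n; p)] and h(p) := E[f(D; p)], where f(l; p) := ∑_{r=k}^l r·C(l,r)p^r(1−p)^{l−r}. Then h_n → h uniformly on [0,1], and for every j ≥ 1, the j-th derivatives satisfy d^j h_n/dp^j → d^j h/dp^j uniformly on [0,1]. -/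
open Filter Topology

/-- `f(l;p) = E[B·1{B ≥ k}]` for `B ~ Bin(l,p)`. -/
noncomputable def truncBinMean (k l : ℕ) (p : ℝ) : ℝ :=
  ∑ r ∈ Finset.Icc k l, (r : ℝ) * binomProb l r p

/-- `h(p) = E[f(D;p)]` where `D` has pmf `w`. -/
noncomputable def hFun (k : ℕ) (w : ℕ → ℝ) (p : ℝ) : ℝ :=
  ∑' l : ℕ, w l * truncBinMean k l p

/-!
On `[-1, 2]` the `j`-th derivative of `truncBinMean k l` is at most `l (2l)^j 4^l` (Leibniz rule
on `p^r (1-p)^(l-r)`), and the moment bound with `A = 5` gives `w n l ≤ C 5^(-l)` uniformly in `n`.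
Hence every derivative series of `hFun` is dominated, uniformly in `n`, by the summable sequence
`C l (2l)^j (4/5)^l`. This justifies termwise differentiation on the open interval
`(-1, 2) ⊇ [0, 1]`, and by dominated convergence `∑ |w n l - wLim l| l (2l)^j 4^l → 0`, which
bounds the uniform error.
-/

open Finset
open scoped ContDiff

theorem abs_iteratedDeriv_pow_le (i a : ℕ) {x R : ℝ} (hR : 1 ≤ R) (hx : |x| ≤ R) :
    |iteratedDeriv i (· ^ a) x| ≤ a ^ i * R ^ a := by
  rw [iteratedDeriv_pow, abs_mul, abs_pow, Nat.abs_cast]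
  gcongr
  · exact_mod_cast Nat.descFactorial_le_pow a i
  · calc |x| ^ (a - i) ≤ R ^ (a - i) := by gcongr
      _ ≤ R ^ a := pow_le_pow_right₀ hR (Nat.sub_le a i)

theorem abs_iteratedDeriv_one_sub_pow_le (i a : ℕ) {x R : ℝ} (hR : 1 ≤ R)
    (hx : |1 - x| ≤ R) :
    |iteratedDeriv i (fun y => (1 - y) ^ a) x| ≤ a ^ i * R ^ a := by
  simp only [iteratedDeriv_comp_const_sub i (fun y : ℝ => y ^ a) 1, smul_eq_mul, abs_mul,
    abs_pow, abs_neg, abs_one, one_pow, one_mul]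
  exact abs_iteratedDeriv_pow_le i a hR hx

theorem abs_iteratedDeriv_mul_le {f g : ℝ → ℝ} {x a F G : ℝ} {n : ℕ} (hf : ContDiffAt ℝ n f x)
    (hg : ContDiffAt ℝ n g x) (hfb : ∀ i ≤ n, |iteratedDeriv i f x| ≤ a ^ i * F)
    (hgb : ∀ i ≤ n, |iteratedDeriv i g x| ≤ a ^ i * G) :
    |iteratedDeriv n (fun y => f y * g y) x| ≤ (2 * a) ^ n * (F * G) := by
  rw [iteratedDeriv_fun_mul hf hg]
  calc _ ≤ ∑ i ∈ range (n + 1), (n.choose i : ℝ) * (a ^ i * F) * (a ^ (n - i) * G) := by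
        refine (abs_sum_le_sum_abs _ _).trans (sum_le_sum fun i hi => ?_)
        have hin : i ≤ n := Nat.lt_succ_iff.1 (mem_range.1 hi)
        have hF : 0 ≤ a ^ i * F := (abs_nonneg _).trans (hfb i hin)
        rw [abs_mul, abs_mul, Nat.abs_cast]
        gcongr
        exacts [hfb i hin, hgb (n - i) (Nat.sub_le n i)]
    _ = (2 * a) ^ n * (F * G) := by
        rw [two_mul, add_pow, sum_mul]
        exact sum_congr rfl fun i _ => by ring

theorem eqOn_iteratedDeriv_tsum {g : ℕ → ℝ → ℝ} {t : Set ℝ} (ht : IsOpen t)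
    (h't : IsPreconnected t) (hg : ∀ n, ContDiff ℝ ∞ (g n)) {u : ℕ → ℕ → ℝ}
    (hu : ∀ j, Summable (u j)) (hgu : ∀ j n, ∀ y ∈ t, ‖iteratedDeriv j (g n) y‖ ≤ u j n)
    (j : ℕ) :
    Set.EqOn (iteratedDeriv j fun y => ∑' n, g n y) (fun y => ∑' n, iteratedDeriv j (g n) y) t := by
  induction j with
  | zero => intro y _; simp
  | succ j ih =>
    intro y hy
    have hderiv : ∀ n, ∀ z ∈ t,
        HasDerivAt (iteratedDeriv j (g n)) (iteratedDeriv (j + 1) (g n) z) z := fun n z _ => by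
      rw [iteratedDeriv_succ]
      exact ((hg n).differentiable_iteratedDeriv j
        (mod_cast ENat.natCast_lt_top j)).differentiableAt.hasDerivAt
    rw [iteratedDeriv_succ, (ih.eventuallyEq_of_mem (ht.mem_nhds hy)).deriv_eq]
    exact (hasDerivAt_tsum_of_isPreconnected (hu (j + 1)) ht h't hderiv (hgu (j + 1)) hy
      ((hu j).of_norm_bounded fun n => hgu j n y hy) hy).deriv

theorem tendstoUniformlyOn_tsum_mul_of_tendsto {α : Type*} {F : ℕ → α → ℝ} {s : Set α}
    {B d : ℕ → ℝ} {w : ℕ → ℕ → ℝ} {wLim : ℕ → ℝ} (hF : ∀ l, ∀ x ∈ s, |F l x| ≤ B l)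
    (hdB : Summable fun l => d l * B l) (hw : ∀ n l, |w n l| ≤ d l)
    (hwLim : ∀ l, |wLim l| ≤ d l) (hlim : ∀ l, Tendsto (fun n => w n l) atTop (𝓝 (wLim l))) :
    TendstoUniformlyOn (fun n x => ∑' l, w n l * F l x) (fun x => ∑' l, wLim l * F l x)
      atTop s := by
  have hdom : ∀ n l, |wLim l - w n l| * |B l| ≤ 2 * |d l * B l| := fun n l => by
    have hd : 0 ≤ d l := (abs_nonneg _).trans (hwLim l)
    rw [abs_mul, abs_of_nonneg hd]
    nlinarith [abs_sub (wLim l) (w n l), hw n l, hwLim l, abs_nonneg (B l)]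
  have herr : ∀ n, Summable fun l => |wLim l - w n l| * |B l| := fun n =>
    (hdB.abs.mul_left 2).of_nonneg_of_le (fun l => by positivity) (hdom n)
  have herr_lim : Tendsto (fun n => ∑' l, |wLim l - w n l| * |B l|) atTop (𝓝 0) := by
    simpa using tendsto_tsum_of_dominated_convergence (hdB.abs.mul_left 2)
      (fun l => ((hlim l).const_sub (wLim l)).abs.mul_const |B l|)
      (Eventually.of_forall fun n l => by
        rw [Real.norm_eq_abs, abs_of_nonneg (by positivity)]
        exact hdom n l)
  have hsum : ∀ v : ℕ → ℝ, (∀ l, |v l| ≤ d l) → ∀ x ∈ s, Summable fun l => v l * F l x :=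
    fun v hv x hx => hdB.abs.of_norm_bounded fun l => by
      rw [Real.norm_eq_abs, abs_mul, abs_mul]
      exact mul_le_mul ((hv l).trans (le_abs_self _)) ((hF l x hx).trans (le_abs_self _))
        (abs_nonneg _) (abs_nonneg _)
  rw [Metric.tendstoUniformlyOn_iff]
  intro ε hε
  filter_upwards [herr_lim.eventually (gt_mem_nhds hε)] with n hn x hx
  rw [Real.dist_eq, ← (hsum _ hwLim x hx).tsum_sub (hsum _ (hw n) x hx)]
  refine lt_of_le_of_lt ?_ hn
  rw [← Real.norm_eq_abs]
  refine tsum_of_norm_bounded (herr n).hasSum fun l => ?_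
  rw [← sub_mul, Real.norm_eq_abs, abs_mul]
  exact mul_le_mul_of_nonneg_left ((hF l x hx).trans (le_abs_self _)) (abs_nonneg _)

theorem abs_le_of_tsum_mul_pow_le {v : ℕ → ℝ} (hv : ∀ l, 0 ≤ v l) {A C : ℝ} (hA : 0 < A)
    (hs : Summable fun l => v l * A ^ l) (hC : ∑' l, v l * A ^ l ≤ C) (l : ℕ) :
    |v l| ≤ C * A⁻¹ ^ l := by
  rw [abs_of_nonneg (hv l), inv_pow, ← div_eq_mul_inv, le_div_iff₀ (pow_pos hA l)]
  exact (hs.le_tsum l fun i _ => mul_nonneg (hv i) (pow_nonneg hA.le _)).trans hC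

theorem abs_iteratedDeriv_binomProb_le (j : ℕ) {l r : ℕ} (hr : r ≤ l) {p : ℝ}
    (hp : p ∈ Set.Icc (-1 : ℝ) 2) :
    |iteratedDeriv j (binomProb l r) p| ≤ l.choose r * ((2 * l) ^ j * 2 ^ l) := by
  have hbinom : binomProb l r = fun q => (l.choose r : ℝ) * (q ^ r * (1 - q) ^ (l - r)) := by
    funext q
    rw [binomProb, mul_assoc]
  have hp2 : |p| ≤ 2 := abs_le.2 ⟨by linarith [hp.1], hp.2⟩
  have hq2 : |1 - p| ≤ 2 := abs_le.2 ⟨by linarith [hp.2], by linarith [hp.1]⟩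
  rw [hbinom, iteratedDeriv_const_mul_field, abs_mul, Nat.abs_cast]
  gcongr
  calc _ ≤ (2 * l : ℝ) ^ j * (2 ^ r * 2 ^ (l - r)) :=
        abs_iteratedDeriv_mul_le (by fun_prop) (by fun_prop)
          (fun i _ => (abs_iteratedDeriv_pow_le i r one_le_two hp2).trans (by gcongr))
          (fun i _ => (abs_iteratedDeriv_one_sub_pow_le i (l - r) one_le_two hq2).trans
            (by gcongr; exact_mod_cast Nat.sub_le l r))
    _ = (2 * l) ^ j * 2 ^ l := by rw [← pow_add, Nat.add_sub_cancel' hr]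

theorem abs_iteratedDeriv_truncBinMean_le (j k l : ℕ) {p : ℝ} (hp : p ∈ Set.Icc (-1 : ℝ) 2) :
    |iteratedDeriv j (truncBinMean k l) p| ≤ l * (2 * l) ^ j * 4 ^ l := by
  have hsum : iteratedDeriv j (truncBinMean k l) p =
      ∑ r ∈ Icc k l, r * iteratedDeriv j (binomProb l r) p := by
    change iteratedDeriv j (fun q => ∑ r ∈ Icc k l, (r : ℝ) * binomProb l r q) p = _
    rw [iteratedDeriv_fun_sum fun r _ => by unfold binomProb; fun_prop]
    simp only [iteratedDeriv_const_mul_field]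
  have hchoose : ∑ r ∈ Icc k l, (l.choose r : ℝ) ≤ 2 ^ l := by
    have hsub : Icc k l ⊆ range (l + 1) := fun r hr =>
      mem_range.2 (Nat.lt_succ_of_le (mem_Icc.1 hr).2)
    exact_mod_cast (sum_le_sum_of_subset hsub).trans (Nat.sum_range_choose l).le
  rw [hsum]
  calc _ ≤ ∑ r ∈ Icc k l, (l : ℝ) * (l.choose r * ((2 * l) ^ j * 2 ^ l)) := by
        refine (abs_sum_le_sum_abs _ _).trans (sum_le_sum fun r hr => ?_)
        have hrl := (mem_Icc.1 hr).2
        rw [abs_mul, Nat.abs_cast]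
        gcongr
        exact abs_iteratedDeriv_binomProb_le j hrl hp
    _ ≤ l * (2 ^ l * ((2 * l) ^ j * 2 ^ l)) := by
        rw [← mul_sum, ← sum_mul]
        gcongr
    _ = l * (2 * l) ^ j * 4 ^ l := by
        rw [show (4 : ℝ) ^ l = 2 ^ l * 2 ^ l by rw [← mul_pow]; norm_num]
        ring

theorem summable_inv_five_pow_mul_deriv_bound (C : ℝ) (j : ℕ) :
    Summable fun l : ℕ => C * 5⁻¹ ^ l * (l * (2 * l) ^ j * 4 ^ l) := by
  have h := (summable_pow_mul_geometric_of_norm_lt_one (j + 1)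
    (by norm_num : ‖(4 / 5 : ℝ)‖ < 1)).mul_left (C * 2 ^ j)
  refine h.congr fun l => ?_
  rw [div_eq_mul_inv, mul_pow]
  ring

theorem eqOn_iteratedDeriv_hFun (k j : ℕ) {v : ℕ → ℝ} {C : ℝ}
    (hv : ∀ l, |v l| ≤ C * 5⁻¹ ^ l) :
    Set.EqOn (iteratedDeriv j (hFun k v))
      (fun p => ∑' l, v l * iteratedDeriv j (truncBinMean k l) p) (Set.Ioo (-1) 2) := by
  have hbound : ∀ j l, ∀ p ∈ Set.Ioo (-1 : ℝ) 2,
      ‖iteratedDeriv j (fun q => v l * truncBinMean k l q) p‖ ≤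
        C * 5⁻¹ ^ l * (l * (2 * l) ^ j * 4 ^ l) := fun j l p hp => by
    rw [iteratedDeriv_const_mul_field, Real.norm_eq_abs, abs_mul]
    exact mul_le_mul (hv l)
      (abs_iteratedDeriv_truncBinMean_le j k l (Set.Ioo_subset_Icc_self hp))
      (abs_nonneg _) ((abs_nonneg _).trans (hv l))
  change Set.EqOn (iteratedDeriv j fun p => ∑' l, v l * truncBinMean k l p) _ _
  simpa only [iteratedDeriv_const_mul_field] using
    eqOn_iteratedDeriv_tsum isOpen_Ioo isPreconnected_Ioo
      (fun l => contDiff_const.mul (by unfold truncBinMean binomProb; fun_prop))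
      (summable_inv_five_pow_mul_deriv_bound C) hbound j

theorem tendstoUniformlyOn_iteratedDeriv_hFun (k j : ℕ) {w : ℕ → ℕ → ℝ} {wLim : ℕ → ℝ}
    {C : ℝ} (hw : ∀ n l, |w n l| ≤ C * 5⁻¹ ^ l)
    (hlim : ∀ l, Tendsto (fun n => w n l) atTop (𝓝 (wLim l))) :
    TendstoUniformlyOn (fun n => iteratedDeriv j (hFun k (w n))) (iteratedDeriv j (hFun k wLim))
      atTop (Set.Icc 0 1) := by
  have hwLim : ∀ l, |wLim l| ≤ C * 5⁻¹ ^ l := fun l =>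
    le_of_tendsto (hlim l).abs (Eventually.of_forall fun n => hw n l)
  have hsub : Set.Icc (0 : ℝ) 1 ⊆ Set.Ioo (-1) 2 :=
    Set.Icc_subset_Ioo (by norm_num) (by norm_num)
  have hseries := tendstoUniformlyOn_tsum_mul_of_tendsto
    (fun l p hp => abs_iteratedDeriv_truncBinMean_le j k l hp)
    (summable_inv_five_pow_mul_deriv_bound C j) hw hwLim hlim
  refine ((hseries.mono (hsub.trans Set.Ioo_subset_Icc_self)).congr ?_).congr_right ?_
  · exact Eventually.of_forall fun n => ((eqOn_iteratedDeriv_hFun k j (hw n)).mono hsub).symm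
  · exact ((eqOn_iteratedDeriv_hFun k j hwLim).mono hsub).symm

theorem hFun_uniform_convergence_general (k : ℕ)
    (w : ℕ → ℕ → ℝ) (wLim : ℕ → ℝ)
    (hw0 : ∀ n l, 0 ≤ w n l)
    (hdist : ∀ l : ℕ, Tendsto (fun n => w n l) atTop (𝓝 (wLim l)))
    (hmom : ∀ A : ℝ, 1 < A → ∃ C : ℝ, ∀ n,
      (Summable fun l : ℕ => w n l * A ^ l) ∧ (∑' l : ℕ, w n l * A ^ l) ≤ C) :
    TendstoUniformlyOn (fun n => hFun k (w n)) (hFun k wLim) atTop (Set.Icc 0 1) ∧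
    ∀ j : ℕ, 1 ≤ j →
      TendstoUniformlyOn (fun n => iteratedDeriv j (hFun k (w n)))
        (iteratedDeriv j (hFun k wLim)) atTop (Set.Icc 0 1) := by
  obtain ⟨C, hC⟩ := hmom 5 (by norm_num)
  have hw : ∀ n l, |w n l| ≤ C * 5⁻¹ ^ l := fun n l =>
    abs_le_of_tsum_mul_pow_le (hw0 n) (by norm_num) (hC n).1 (hC n).2 l
  have hderiv (j : ℕ) := tendstoUniformlyOn_iteratedDeriv_hFun k j hw hdist
  exact ⟨by simpa using hderiv 0, fun j _ => hderiv j⟩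

theorem hFun_uniform_convergence (k : ℕ) (hk : 2 ≤ k)
    (w : ℕ → ℕ → ℝ) (wLim : ℕ → ℝ)
    (hw0 : ∀ n l, 0 ≤ w n l) (hw1 : ∀ n, ∑' l, w n l = 1)
    (hwLim0 : ∀ l, 0 ≤ wLim l) (hwLim1 : ∑' l, wLim l = 1)
    (hdist : ∀ l : ℕ, Tendsto (fun n => w n l) atTop (𝓝 (wLim l)))
    (hmom : ∀ A : ℝ, 1 < A → ∃ C : ℝ, ∀ n,
      (Summable fun l : ℕ => w n l * A ^ l) ∧ (∑' l : ℕ, w n l * A ^ l) ≤ C) :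
    TendstoUniformlyOn (fun n => hFun k (w n)) (hFun k wLim) atTop (Set.Icc 0 1) ∧
    ∀ j : ℕ, 1 ≤ j →
      TendstoUniformlyOn (fun n => iteratedDeriv j (hFun k (w n)))
        (iteratedDeriv j (hFun k wLim)) atTop (Set.Icc 0 1) :=
  hFun_uniform_convergence_general k w wLim hw0 hdist hmom
end

section
/- For λ > 0, k ≥ 2, integer r ≥ k, and x ∈ (0,1], if D ~ Poisson(λ) and q_j(p) := P(D_p ≥ j) = ψ_j(λp), then the covariance formula σ_{rW}(x) := 2 x^{r+2} ∑_{j=r}^∞ C(j−1, r−1) ∫_x^1 (p−x)^{j−r} p^{−j−2} q_j'(p) dp simplifies to σ_{rW}(x) = ((λx)^r e^{−λx}/(r−1)!)·(1 − x²). -/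
open Real MeasureTheory intervalIntegral

/-!
Writing `j = r + i`, the binomial coefficient cancels the factorials of the Poisson weight, and
the `i`-th integrand becomes `(λ(p - x))^i / i!` times `λ^r e^{-λp} / ((r-1)! p^3)`. Summing the
exponential series under the integral turns `e^{λ(p-x)} e^{-λp}` into the constant `e^{-λx}`,
leaving `λ^r e^{-λx} / (r-1)! · ∫_x^1 p^{-3} dp = λ^r e^{-λx} (x^{-2} - 1) / (2 (r-1)!)`.
-/

open scoped Nat

/-- The `n`-th term is dominated by `C^n / n! * ‖g‖`, where `C` bounds `|h|` on `[a, b]`. -/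
theorem hasSum_intervalIntegral_pow_div_factorial_mul {a b : ℝ} {h g : ℝ → ℝ}
    (hh : ContinuousOn h (Set.uIcc a b)) (hg : IntervalIntegrable g volume a b) :
    HasSum (fun n => ∫ t in a..b, h t ^ n / n ! * g t) (∫ t in a..b, exp (h t) * g t) := by
  obtain ⟨C, hC⟩ := isCompact_uIcc.exists_bound_of_continuousOn hh
  have hΙ : Set.uIoc a b ⊆ Set.uIcc a b := Set.uIoc_subset_uIcc
  have hg_meas : AEStronglyMeasurable g (volume.restrict (Set.uIoc a b)) :=
    ((intervalIntegrable_iff.1 hg).aestronglyMeasurable)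
  refine hasSum_integral_of_dominated_convergence (fun n t => C ^ n / n ! * ‖g t‖)
    (fun n => ?_) (fun n => ?_)
    (.of_forall fun t _ => (summable_pow_div_factorial C).mul_right _) ?_
    (.of_forall fun t _ => ?_)
  · exact ((((hh.mono hΙ).pow n).div_const _).aestronglyMeasurable measurableSet_uIoc).mul
      hg_meas
  · refine .of_forall fun t ht => ?_
    rw [norm_mul, norm_div, norm_pow, RCLike.norm_natCast]
    gcongr
    exact hC t (hΙ ht)
  · have hexp : ∑' n, C ^ n / n ! = exp C := by
      rw [exp_eq_exp_ℝ, (NormedSpace.expSeries_div_hasSum_exp C).tsum_eq]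
    simp_rw [tsum_mul_right, hexp]
    exact hg.norm.const_mul _
  · simpa [exp_eq_exp_ℝ] using (NormedSpace.expSeries_div_hasSum_exp (h t)).mul_right (g t)

theorem choose_mul_poissonProb_div_pow (lam x : ℝ) {p : ℝ} (hp : p ≠ 0) (m i : ℕ) :
    ((m + i).choose m : ℝ) * ((p - x) ^ i * (lam * poissonProb (m + i) (lam * p)) / p ^ (m + i + 3))
      = (lam * (p - x)) ^ i / i ! * (lam ^ (m + 1) * exp (-(lam * p)) / (m ! * p ^ 3)) := by
  have hfact : ((m + i).choose m : ℝ) * m ! * i ! = (m + i)! := by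
    have h := Nat.choose_mul_factorial_mul_factorial (m.le_add_right i)
    rw [Nat.add_sub_cancel_left] at h
    exact_mod_cast h
  have hchoose : ((m + i).choose m : ℝ) ≠ 0 := by
    exact_mod_cast (Nat.choose_pos (m.le_add_right i)).ne'
  rw [poissonProb, ← hfact, mul_pow lam (p - x)]
  field_simp
  ring

/-- The series is indexed by `i = j - r`, and `q_j'(p) = λ π_{j-1}(λp)` is written out with
`poissonProb`. -/
theorem sigma_rW_poisson_general (lam : ℝ) (k r : ℕ) (hk : 2 ≤ k) (hr : k ≤ r)
    (x : ℝ) (hx : x ∈ Set.Ioc (0:ℝ) 1) :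
    2 * x ^ (r + 2) * ∑' i : ℕ, ((r + i - 1).choose (r - 1) : ℝ) *
        ∫ p in x..1, (p - x) ^ i * (lam * poissonProb (r + i - 1) (lam * p)) / p ^ (r + i + 2)
      = (lam * x) ^ r * Real.exp (-(lam * x)) / (r - 1).factorial * (1 - x ^ 2) := by
  obtain ⟨hx0, -⟩ := hx
  obtain ⟨m, rfl⟩ : ∃ m, r = m + 1 := ⟨r - 1, by omega⟩
  have hp0 : ∀ p ∈ Set.uIcc x 1, p ≠ 0 := fun p hp =>
    (lt_of_lt_of_le (lt_min hx0 one_pos) hp.1).ne'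
  set G : ℝ → ℝ := fun p => lam ^ (m + 1) * exp (-(lam * p)) / (m ! * p ^ 3)
  have hterm : ∀ i : ℕ, ((m + 1 + i - 1).choose (m + 1 - 1) : ℝ) *
      ∫ p in x..1, (p - x) ^ i * (lam * poissonProb (m + 1 + i - 1) (lam * p)) / p ^ (m + 1 + i + 2)
      = ∫ p in x..1, (lam * (p - x)) ^ i / i ! * G p := fun i => by
    rw [show m + 1 + i - 1 = m + i by omega, Nat.add_sub_cancel,
      show m + 1 + i + 2 = m + i + 3 by omega, ← intervalIntegral.integral_const_mul]
    exact integral_congr fun p hp => choose_mul_poissonProb_div_pow lam x (hp0 p hp) m i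
  have hG : ContinuousOn G (Set.uIcc x 1) := by
    fun_prop (disch := exact fun p hp => mul_ne_zero (by positivity) (pow_ne_zero 3 (hp0 p hp)))
  have hsum := hasSum_intervalIntegral_pow_div_factorial_mul
    (h := fun p => lam * (p - x)) (by fun_prop) hG.intervalIntegrable
  have hexp : ∀ p ∈ Set.uIcc x 1, exp (lam * (p - x)) * G p
      = lam ^ (m + 1) * exp (-(lam * x)) / m ! * p ^ (-3 : ℤ) := fun p hp => by
    rw [zpow_neg, show -(lam * x) = lam * (p - x) + -(lam * p) by ring, exp_add]
    simp only [G]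
    field_simp
  have hx0' : (0 : ℝ) ∉ Set.uIcc x 1 := fun h => hp0 0 h rfl
  rw [tsum_congr hterm, hsum.tsum_eq, integral_congr hexp, intervalIntegral.integral_const_mul,
    integral_zpow (Or.inr ⟨by norm_num, hx0'⟩), Nat.add_sub_cancel, one_zpow,
    show (-3 + 1 : ℤ) = -2 by norm_num, zpow_neg, zpow_ofNat]
  field_simp
  ring

/-- Example 5.2 together with (5.56): in the Poisson case `q_j'(p) = λ π_{j-1}(λp)` and
`σ_{rW}(x) = (λx)^r e^{-λx} (1-x²)/(r-1)!`. -/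
theorem sigma_rW_poisson (lam : ℝ) (hlam : 0 < lam) (k r : ℕ) (hk : 2 ≤ k) (hr : k ≤ r)
    (x : ℝ) (hx : x ∈ Set.Ioc (0:ℝ) 1) :
    2 * x ^ (r + 2) * ∑' i : ℕ, ((r + i - 1).choose (r - 1) : ℝ) *
        ∫ p in x..1, (p - x) ^ i * (lam * poissonProb (r + i - 1) (lam * p)) / p ^ (r + i + 2)
      = (lam * x) ^ r * Real.exp (-(lam * x)) / (r - 1).factorial * (1 - x ^ 2) :=
  sigma_rW_poisson_general lam k r hk hr x hx
end
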